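/- arXiv:1402.1599 — 2 statements merged into one kernel-verified Lean document; each statement's English description precedes it below -/
import Mathlib

section
/- If the equation x_{k+1} = A_k x_k is nonuniformly exponentially bounded (there exist K > 0, ε ≥ 1, a ≥ 1 with ‖Φ(k,l)‖ ≤ K a^{|k−l|} ε^l for all k, l ∈ ℤ), then the nonuniform dichotomy spectrum is a disjoint union of at most N compact intervals: there exist 0 ≤ n ≤ N and reals 0 < a₁ ≤ b₁ < a₂ ≤ b₂ < ⋯ < a_n ≤ b_n with Σ_NED(A) = [a₁,b₁] ∪ [a₂,b₂] ∪ ⋯ ∪ [a_n,b_n]. -/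
open Matrix

attribute [local instance] Matrix.linftyOpNormedAddCommGroup
attribute [local instance] Matrix.linftyOpNormedSpace

abbrev Mat (N : ℕ) := Matrix (Fin N) (Fin N) ℝ

noncomputable def fundSolNat {N : ℕ} (A : ℤ → GL (Fin N) ℝ) : ℕ → GL (Fin N) ℝ
  | 0 => 1
  | n + 1 => A (n : ℤ) * fundSolNat A n

noncomputable def fundSolNeg {N : ℕ} (A : ℤ → GL (Fin N) ℝ) : ℕ → GL (Fin N) ℝ
  | 0 => (A (-1))⁻¹
  | n + 1 => (A (Int.negSucc (n + 1)))⁻¹ * fundSolNeg A n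

noncomputable def fundSol {N : ℕ} (A : ℤ → GL (Fin N) ℝ) : ℤ → GL (Fin N) ℝ
  | Int.ofNat n => fundSolNat A n
  | Int.negSucc n => fundSolNeg A n

/-- The evolution operator `Φ(k,l)` of `x_{k+1} = A_k x_k`. -/
noncomputable def evol {N : ℕ} (A : ℤ → GL (Fin N) ℝ) (k l : ℤ) : Mat N :=
  ↑(fundSol A k * (fundSol A l)⁻¹)

def IsInvariantProjector {N : ℕ} (A : ℤ → GL (Fin N) ℝ) (P : ℤ → Mat N) : Prop :=
  (∀ k, P k * P k = P k) ∧ ∀ k, P (k + 1) * (A k : Mat N) = (A k : Mat N) * P k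

/-- Evolution operator `Φ_γ(k,l) = γ^{-(k-l)} Φ(k,l)` of `x_{k+1} = (1/γ) A_k x_k`. -/
noncomputable def evolW {N : ℕ} (A : ℤ → GL (Fin N) ℝ) (γ : ℝ) (k l : ℤ) : Mat N :=
  γ ^ (l - k) • evol A k l

def NEDWith {N : ℕ} (A : ℤ → GL (Fin N) ℝ) (γ : ℝ) (P : ℤ → Mat N) (K α ε : ℝ) : Prop :=
  IsInvariantProjector A P ∧ 1 ≤ K ∧ 0 < α ∧ α < 1 ∧ 1 ≤ ε ∧
    (∀ k l : ℤ, l ≤ k → ‖evolW A γ k l * P l‖ ≤ K * α ^ (k - l) * ε ^ l) ∧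
    (∀ k l : ℤ, k ≤ l → ‖evolW A γ k l * (1 - P l)‖ ≤ K * (1 / α) ^ (k - l) * ε ^ l)

def HasNED {N : ℕ} (A : ℤ → GL (Fin N) ℝ) (γ : ℝ) : Prop :=
  ∃ P K α ε, NEDWith A γ P K α ε

def HasStrongNED {N : ℕ} (A : ℤ → GL (Fin N) ℝ) (γ : ℝ) : Prop :=
  ∃ P K α ε, NEDWith A γ P K α ε ∧ α * ε ^ 2 < 1

def HasED {N : ℕ} (A : ℤ → GL (Fin N) ℝ) (γ : ℝ) : Prop :=
  ∃ P K α, NEDWith A γ P K α 1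

def SigmaNED {N : ℕ} (A : ℤ → GL (Fin N) ℝ) : Set ℝ := {γ | 0 < γ ∧ ¬ HasStrongNED A γ}

def rhoNED {N : ℕ} (A : ℤ → GL (Fin N) ℝ) : Set ℝ := {γ | 0 < γ ∧ HasStrongNED A γ}

def SigmaED {N : ℕ} (A : ℤ → GL (Fin N) ℝ) : Set ℝ := {γ | 0 < γ ∧ ¬ HasED A γ}

def stableSet {N : ℕ} (A : ℤ → GL (Fin N) ℝ) (γ ε : ℝ) (l : ℤ) : Set (Fin N → ℝ) :=
  {ξ | ∃ C : ℝ, ∀ k : ℤ, l ≤ k → ‖(evol A k l).mulVec ξ‖ * γ ^ (-k) * ε ^ (-l) ≤ C}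

def unstableSet {N : ℕ} (A : ℤ → GL (Fin N) ℝ) (γ ε : ℝ) (l : ℤ) : Set (Fin N → ℝ) :=
  {ξ | ∃ C : ℝ, ∀ k : ℤ, k ≤ l → ‖(evol A k l).mulVec ξ‖ * γ ^ (-k) * ε ^ (-l) ≤ C}


section Alg
variable {N : ℕ} (A : ℤ → GL (Fin N) ℝ)

lemma evol_mul (k l m : ℤ) : evol A k l * evol A l m = evol A k m := by
  unfold evol
  rw [← Units.val_mul]
  congr 1
  group

lemma evol_self (k : ℤ) : evol A k k = 1 := by
  unfold evol
  rw [mul_inv_cancel, Units.val_one]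

lemma evol_inv_mul (k l : ℤ) : evol A l k * evol A k l = 1 := by
  rw [evol_mul, evol_self]

lemma swap_inv {N : ℕ} (u : GL (Fin N) ℝ) (X Y : Mat N) (h : X * ↑u = ↑u * Y) :
    Y * ↑(u⁻¹) = ↑(u⁻¹) * X := by
  calc Y * (↑(u⁻¹) : Mat N) = (↑(u⁻¹) * ↑u : Mat N) * Y * ↑(u⁻¹) := by
        rw [Units.inv_mul, one_mul]
    _ = ↑(u⁻¹) * (X * ↑u) * ↑(u⁻¹) := by rw [mul_assoc (↑(u⁻¹) : Mat N), ← h]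
    _ = ↑(u⁻¹) * X * (↑u * ↑(u⁻¹)) := by rw [mul_assoc, mul_assoc, mul_assoc]
    _ = ↑(u⁻¹) * X := by rw [Units.mul_inv, mul_one]

variable {P : ℤ → Mat N} (hP : IsInvariantProjector A P)
include hP

lemma fundSol_comm : ∀ k : ℤ, P k * (fundSol A k : Mat N) = (fundSol A k : Mat N) * P 0 := by
  intro k
  cases k with
  | ofNat n =>
    show P (Int.ofNat n) * (fundSolNat A n : Mat N) = (fundSolNat A n : Mat N) * P 0
    induction n with
    | zero => simp [fundSolNat]
    | succ n ih =>
      have h1 : (Int.ofNat (n+1)) = (Int.ofNat n) + 1 := by simp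
      have hun : (fundSolNat A (n+1) : Mat N) = (A (Int.ofNat n) : Mat N) * (fundSolNat A n : Mat N) := by
        rw [show fundSolNat A (n+1) = A (n : ℤ) * fundSolNat A n from rfl, Units.val_mul]
        norm_cast
      rw [hun, h1, ← mul_assoc, hP.2 (Int.ofNat n), mul_assoc, ih, ← mul_assoc]
  | negSucc n =>
    show P (Int.negSucc n) * (fundSolNeg A n : Mat N) = (fundSolNeg A n : Mat N) * P 0
    induction n with
    | zero =>
      have h := hP.2 (-1)
      norm_num at h
      exact swap_inv (A (-1)) (P 0) (P (-1)) h
    | succ n ih =>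
      have h1 : Int.negSucc n = Int.negSucc (n+1) + 1 := by
        rw [Int.negSucc_eq, Int.negSucc_eq]; push_cast; ring
      have h := hP.2 (Int.negSucc (n+1))
      rw [← h1] at h
      have h2 := swap_inv (A (Int.negSucc (n+1))) (P (Int.negSucc n)) (P (Int.negSucc (n+1))) h
      have hun : (fundSolNeg A (n+1) : Mat N)
          = ((A (Int.negSucc (n+1)))⁻¹ : GL (Fin N) ℝ) * (fundSolNeg A n : Mat N) := by
        rw [show fundSolNeg A (n+1) = (A (Int.negSucc (n+1)))⁻¹ * fundSolNeg A n from rfl,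
          Units.val_mul]
      rw [hun, ← mul_assoc, h2, mul_assoc, ih, ← mul_assoc]

lemma proj_evol (k l : ℤ) : P k * evol A k l = evol A k l * P l := by
  have hk := fundSol_comm A hP k
  have hl := swap_inv (fundSol A l) (P l) (P 0) (fundSol_comm A hP l)
  unfold evol
  rw [Units.val_mul, ← mul_assoc, hk, mul_assoc, hl, ← mul_assoc]

lemma proj_conj (l : ℤ) : P l = evol A l 0 * P 0 * evol A 0 l := by
  have h := proj_evol A hP l 0
  have h2 := congrArg (· * evol A 0 l) h
  rw [mul_assoc, evol_inv_mul, mul_one] at h2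
  rw [h2, mul_assoc]
end Alg

section An
variable {N : ℕ} (A : ℤ → GL (Fin N) ℝ)

lemma evol_mul' (k l m : ℤ) : evol A k l * evol A l m = evol A k m := evol_mul A k l m
lemma evol_self' (k : ℤ) : evol A k k = 1 := evol_self A k
lemma proj_evol' {P : ℤ → Mat N} (hP : IsInvariantProjector A P) (k l : ℤ) :
    P k * evol A k l = evol A k l * P l := proj_evol A hP k l

lemma isUnit_evol (k l : ℤ) : IsUnit (evol A k l) :=
  ⟨fundSol A k * (fundSol A l)⁻¹, rfl⟩

lemma norm_evolW_mul {γ : ℝ} (hγ : 0 < γ) (k l : ℤ) (M : Mat N) :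
    ‖evolW A γ k l * M‖ = γ ^ (l - k) * ‖evol A k l * M‖ := by
  rw [evolW, smul_mul_assoc, norm_smul, Real.norm_eq_abs, abs_of_pos (zpow_pos hγ _)]

lemma norm_evol_mul {γ : ℝ} (hγ : 0 < γ) (k l : ℤ) (M : Mat N) :
    ‖evol A k l * M‖ = γ ^ (k - l) * ‖evolW A γ k l * M‖ := by
  rw [norm_evolW_mul A hγ, ← mul_assoc, ← zpow_add₀ (ne_of_gt hγ)]
  norm_num

/-- forward-bounded solutions -/
def Vsub (γ : ℝ) (l : ℤ) : Submodule ℝ (Fin N → ℝ) where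
  carrier := {ξ | ∃ C : ℝ, ∀ k : ℤ, l ≤ k → ‖evol A k l *ᵥ ξ‖ ≤ C * γ ^ k}
  add_mem' := by
    rintro x y ⟨C, hC⟩ ⟨D, hD⟩
    exact ⟨C + D, fun k hk => by
      rw [mulVec_add, add_mul]
      exact (norm_add_le _ _).trans (add_le_add (hC k hk) (hD k hk))⟩
  zero_mem' := ⟨0, fun k hk => by simp [mulVec_zero]⟩
  smul_mem' := by
    rintro c x ⟨C, hC⟩
    exact ⟨|c| * C, fun k hk => by
      rw [mulVec_smul, norm_smul, Real.norm_eq_abs, mul_assoc]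
      exact mul_le_mul_of_nonneg_left (hC k hk) (abs_nonneg c)⟩

/-- backward-bounded solutions -/
def Wsub (γ : ℝ) (l : ℤ) : Submodule ℝ (Fin N → ℝ) where
  carrier := {ξ | ∃ C : ℝ, ∀ k : ℤ, k ≤ l → ‖evol A k l *ᵥ ξ‖ ≤ C * γ ^ k}
  add_mem' := by
    rintro x y ⟨C, hC⟩ ⟨D, hD⟩
    exact ⟨C + D, fun k hk => by
      rw [mulVec_add, add_mul]
      exact (norm_add_le _ _).trans (add_le_add (hC k hk) (hD k hk))⟩
  zero_mem' := ⟨0, fun k hk => by simp [mulVec_zero]⟩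
  smul_mem' := by
    rintro c x ⟨C, hC⟩
    exact ⟨|c| * C, fun k hk => by
      rw [mulVec_smul, norm_smul, Real.norm_eq_abs, mul_assoc]
      exact mul_le_mul_of_nonneg_left (hC k hk) (abs_nonneg c)⟩

lemma C_nonneg {γ C : ℝ} (hγ : 0 < γ) {ξ : Fin N → ℝ} {l : ℤ}
    (h : ‖evol A l l *ᵥ ξ‖ ≤ C * γ ^ l) : 0 ≤ C := by
  have h0 : (0:ℝ) ≤ C * γ ^ l := le_trans (norm_nonneg _) h
  rw [mul_comm] at h0; exact nonneg_of_mul_nonneg_right h0 (zpow_pos hγ l)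
end An

section An2
variable {N : ℕ} (A : ℤ → GL (Fin N) ℝ)

lemma one_div_zpow_eq (α : ℝ) (m : ℤ) : (1/α)^m = α^(-m) := by
  rw [one_div, _root_.inv_zpow, ← _root_.zpow_neg]

lemma range_eq_V {γ K α ε : ℝ} {P : ℤ → Mat N} (hγ : 0 < γ)
    (hN : NEDWith A γ P K α ε) (hs : α * ε ^ 2 < 1) (l : ℤ) :
    LinearMap.range (P l).mulVecLin = Vsub A γ l := by
  obtain ⟨hP, hK, hα0, hα1, hε, hst, hun⟩ := hN
  have hγne : γ ≠ 0 := ne_of_gt hγ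
  have hεpos : (0:ℝ) < ε := lt_of_lt_of_le one_pos hε
  have hεne : ε ≠ 0 := ne_of_gt hεpos
  apply le_antisymm
  · rintro ξ ⟨η, rfl⟩
    refine ⟨K * ε ^ l * γ ^ (-l) * ‖(P l).mulVecLin η‖, fun k hk => ?_⟩
    have hfix : (P l) *ᵥ ((P l).mulVecLin η) = (P l).mulVecLin η := by
      show (P l) *ᵥ ((P l) *ᵥ η) = (P l) *ᵥ η
      rw [mulVec_mulVec, hP.1 l]
    have hb : ‖evol A k l * P l‖ ≤ γ ^ (k-l) * (K * α ^ (k-l) * ε ^ l) :=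
      (norm_evol_mul A hγ k l (P l)).le.trans
        (mul_le_mul_of_nonneg_left (hst k l hk) (zpow_nonneg hγ.le _))
    have hone : α ^ (k-l) ≤ 1 := by
      have := zpow_le_one_of_nonpos₀ (a := 1/α) (by
        rw [le_div_iff₀ hα0, one_mul]; exact hα1.le) (by omega : -(k-l) ≤ 0)
      rwa [one_div_zpow_eq, neg_neg] at this
    calc ‖evol A k l *ᵥ (P l).mulVecLin η‖
        = ‖(evol A k l * P l) *ᵥ (P l).mulVecLin η‖ := by rw [← mulVec_mulVec, hfix]
      _ ≤ ‖evol A k l * P l‖ * ‖(P l).mulVecLin η‖ := linfty_opNorm_mulVec _ _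
      _ ≤ (γ ^ (k-l) * (K * α ^ (k-l) * ε ^ l)) * ‖(P l).mulVecLin η‖ :=
          mul_le_mul_of_nonneg_right hb (norm_nonneg _)
      _ ≤ (γ ^ (k-l) * (K * 1 * ε ^ l)) * ‖(P l).mulVecLin η‖ := by
          have h1 : (0:ℝ) ≤ γ ^ (k-l) := zpow_nonneg hγ.le _
          have h2 : (0:ℝ) ≤ ε ^ l := zpow_nonneg hεpos.le _
          have h3 : K * α ^ (k-l) * ε ^ l ≤ K * 1 * ε ^ l := by
            have : K * α ^ (k-l) ≤ K * 1 :=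
              mul_le_mul_of_nonneg_left hone (by linarith)
            exact mul_le_mul_of_nonneg_right this h2
          exact mul_le_mul_of_nonneg_right (mul_le_mul_of_nonneg_left h3 h1) (norm_nonneg _)
      _ = K * ε ^ l * γ ^ (-l) * ‖(P l).mulVecLin η‖ * γ ^ k := by
          rw [zpow_sub₀ hγne, _root_.zpow_neg]; ring
  · rintro ξ ⟨C, hC⟩
    have hC0 : 0 ≤ C := C_nonneg A hγ (hC l le_rfl)
    have hαε1 : α * ε < 1 := by nlinarith
    have key : ∀ n : ℕ, ‖(1 - P l) *ᵥ ξ‖ ≤ (K * C * γ ^ l * ε ^ l) * (α * ε) ^ n := by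
      intro n
      have hlk : l ≤ l + (n:ℤ) := by
        have : (0:ℤ) ≤ n := Int.natCast_nonneg n
        omega
      have e1 : evol A l (l+(n:ℤ)) * evol A (l+(n:ℤ)) l = 1 := by
        rw [evol_mul', evol_self']
      have hid : evol A l (l+(n:ℤ)) * (1 - P (l+(n:ℤ))) * evol A (l+(n:ℤ)) l = 1 - P l := by
        rw [mul_sub, mul_one, sub_mul, e1, mul_assoc, proj_evol' A hP (l+(n:ℤ)) l,
          ← mul_assoc, e1, one_mul]
      have hb : ‖evol A l (l+(n:ℤ)) * (1 - P (l+(n:ℤ)))‖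
          ≤ γ ^ (l-(l+(n:ℤ))) * (K * α ^ ((l+(n:ℤ))-l) * ε ^ (l+(n:ℤ))) := by
        rw [norm_evol_mul A hγ l (l+(n:ℤ))]
        refine mul_le_mul_of_nonneg_left ?_ (zpow_nonneg hγ.le _)
        have := hun l (l+(n:ℤ)) hlk
        rwa [one_div_zpow_eq, neg_sub] at this
      calc ‖(1 - P l) *ᵥ ξ‖
          = ‖(evol A l (l+(n:ℤ)) * (1 - P (l+(n:ℤ)))) *ᵥ (evol A (l+(n:ℤ)) l *ᵥ ξ)‖ := by
            rw [mulVec_mulVec, hid]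
        _ ≤ ‖evol A l (l+(n:ℤ)) * (1 - P (l+(n:ℤ)))‖ * ‖evol A (l+(n:ℤ)) l *ᵥ ξ‖ :=
            linfty_opNorm_mulVec _ _
        _ ≤ (γ ^ (l-(l+(n:ℤ))) * (K * α ^ ((l+(n:ℤ))-l) * ε ^ (l+(n:ℤ)))) * (C * γ ^ (l+(n:ℤ))) :=
            mul_le_mul hb (hC _ hlk) (norm_nonneg _) (by positivity)
        _ = (K * C * γ ^ l * ε ^ l) * (α * ε) ^ n := by
            rw [show l - (l+(n:ℤ)) = -(n:ℤ) by ring, show (l+(n:ℤ)) - l = (n:ℤ) by ring,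
              zpow_add₀ hεne, zpow_add₀ hγne, zpow_natCast, zpow_natCast, zpow_natCast,
              _root_.zpow_neg, zpow_natCast, mul_pow]
            field_simp
    have hten : Filter.Tendsto (fun n : ℕ => (K * C * γ ^ l * ε ^ l) * (α * ε) ^ n)
        Filter.atTop (nhds 0) := by
      have h0 := tendsto_pow_atTop_nhds_zero_of_lt_one
        (mul_nonneg hα0.le (by linarith : (0:ℝ) ≤ ε)) hαε1
      simpa using h0.const_mul (K * C * γ ^ l * ε ^ l)
    have hzero : (1 - P l) *ᵥ ξ = 0 := norm_le_zero_iff.mp (ge_of_tendsto' hten key)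
    refine ⟨ξ, ?_⟩
    show P l *ᵥ ξ = ξ
    rw [sub_mulVec, one_mulVec] at hzero
    exact (sub_eq_zero.mp hzero).symm
end An2

section An3
variable {N : ℕ} (A : ℤ → GL (Fin N) ℝ)

lemma proj_conj2 {P : ℤ → Mat N} (hP : IsInvariantProjector A P) (k l : ℤ) :
    P l = evol A l k * P k * evol A k l := by
  have e1 : evol A l k * evol A k l = 1 := by rw [evol_mul', evol_self']
  have h := congrArg (· * evol A k l) (proj_evol' A hP l k)
  rwa [mul_assoc, e1, mul_one] at h

lemma ker_eq_W {γ K α ε : ℝ} {P : ℤ → Mat N} (hγ : 0 < γ)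
    (hN : NEDWith A γ P K α ε) (l : ℤ) :
    LinearMap.ker (P l).mulVecLin = Wsub A γ l := by
  obtain ⟨hP, hK, hα0, hα1, hε, hst, hun⟩ := hN
  have hγne : γ ≠ 0 := ne_of_gt hγ
  have hεpos : (0:ℝ) < ε := lt_of_lt_of_le one_pos hε
  have hεne : ε ≠ 0 := ne_of_gt hεpos
  apply le_antisymm
  · intro ξ hξ
    have hξ0 : (P l) *ᵥ ξ = 0 := hξ
    have hfix : (1 - P l) *ᵥ ξ = ξ := by rw [sub_mulVec, one_mulVec, hξ0, sub_zero]
    refine ⟨K * ε ^ l * γ ^ (-l) * ‖ξ‖, fun k hk => ?_⟩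
    have hb : ‖evol A k l * (1 - P l)‖ ≤ γ ^ (k-l) * (K * α ^ (l-k) * ε ^ l) := by
      rw [norm_evol_mul A hγ k l]
      refine mul_le_mul_of_nonneg_left ?_ (zpow_nonneg hγ.le _)
      have := hun k l hk
      rwa [one_div_zpow_eq, neg_sub] at this
    have hone : α ^ (l-k) ≤ 1 := by
      have := zpow_le_one_of_nonpos₀ (a := 1/α) (by
        rw [le_div_iff₀ hα0, one_mul]; exact hα1.le) (by omega : -(l-k) ≤ 0)
      rwa [one_div_zpow_eq, neg_neg] at this
    calc ‖evol A k l *ᵥ ξ‖ = ‖(evol A k l * (1 - P l)) *ᵥ ξ‖ := by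
          rw [← mulVec_mulVec, hfix]
      _ ≤ ‖evol A k l * (1 - P l)‖ * ‖ξ‖ := linfty_opNorm_mulVec _ _
      _ ≤ (γ ^ (k-l) * (K * α ^ (l-k) * ε ^ l)) * ‖ξ‖ :=
          mul_le_mul_of_nonneg_right hb (norm_nonneg _)
      _ ≤ (γ ^ (k-l) * (K * 1 * ε ^ l)) * ‖ξ‖ := by
          have h3 : K * α ^ (l-k) * ε ^ l ≤ K * 1 * ε ^ l := by
            have : K * α ^ (l-k) ≤ K * 1 := mul_le_mul_of_nonneg_left hone (by linarith)
            exact mul_le_mul_of_nonneg_right this (zpow_nonneg hεpos.le _)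
          exact mul_le_mul_of_nonneg_right
            (mul_le_mul_of_nonneg_left h3 (zpow_nonneg hγ.le _)) (norm_nonneg _)
      _ = K * ε ^ l * γ ^ (-l) * ‖ξ‖ * γ ^ k := by
          rw [zpow_sub₀ hγne, _root_.zpow_neg]; ring
  · rintro ξ ⟨C, hC⟩
    have hC0 : 0 ≤ C := C_nonneg A hγ (hC l le_rfl)
    have hαε1 : α / ε < 1 := (div_lt_one hεpos).mpr (by linarith)
    have key : ∀ n : ℕ, ‖(P l) *ᵥ ξ‖ ≤ (K * C * γ ^ l * ε ^ l) * (α / ε) ^ n := by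
      intro n
      have hkl : l - (n:ℤ) ≤ l := by
        have : (0:ℤ) ≤ n := Int.natCast_nonneg n
        omega
      have hb : ‖evol A l (l-(n:ℤ)) * P (l-(n:ℤ))‖
          ≤ γ ^ (l-(l-(n:ℤ))) * (K * α ^ (l-(l-(n:ℤ))) * ε ^ (l-(n:ℤ))) := by
        rw [norm_evol_mul A hγ l (l-(n:ℤ))]
        exact mul_le_mul_of_nonneg_left (hst l (l-(n:ℤ)) hkl) (zpow_nonneg hγ.le _)
      calc ‖(P l) *ᵥ ξ‖
          = ‖(evol A l (l-(n:ℤ)) * P (l-(n:ℤ))) *ᵥ (evol A (l-(n:ℤ)) l *ᵥ ξ)‖ := by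
            rw [mulVec_mulVec, ← proj_conj2 A hP (l-(n:ℤ)) l]
        _ ≤ ‖evol A l (l-(n:ℤ)) * P (l-(n:ℤ))‖ * ‖evol A (l-(n:ℤ)) l *ᵥ ξ‖ :=
            linfty_opNorm_mulVec _ _
        _ ≤ (γ ^ (l-(l-(n:ℤ))) * (K * α ^ (l-(l-(n:ℤ))) * ε ^ (l-(n:ℤ)))) * (C * γ ^ (l-(n:ℤ))) :=
            mul_le_mul hb (hC _ hkl) (norm_nonneg _) (by positivity)
        _ = (K * C * γ ^ l * ε ^ l) * (α / ε) ^ n := by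
            rw [show l-(l-(n:ℤ)) = (n:ℤ) by ring,
              zpow_sub₀ hεne, zpow_sub₀ hγne, zpow_natCast, zpow_natCast, zpow_natCast,
              div_pow]
            field_simp
    have hten : Filter.Tendsto (fun n : ℕ => (K * C * γ ^ l * ε ^ l) * (α / ε) ^ n)
        Filter.atTop (nhds 0) := by
      have h0 := tendsto_pow_atTop_nhds_zero_of_lt_one
        (div_nonneg hα0.le hεpos.le) hαε1
      simpa using h0.const_mul (K * C * γ ^ l * ε ^ l)
    exact norm_le_zero_iff.mp (ge_of_tendsto' hten key)

lemma V_mono {γ γ' : ℝ} (hγ : 0 < γ) (h : γ ≤ γ') (l : ℤ) : Vsub A γ l ≤ Vsub A γ' l := by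
  have hγ' : 0 < γ' := lt_of_lt_of_le hγ h
  have h1 : 1 ≤ γ' / γ := (one_le_div hγ).mpr h
  rintro ξ ⟨C, hC⟩
  have hC0 : 0 ≤ C := C_nonneg A hγ (hC l le_rfl)
  refine ⟨C * max 1 ((γ'/γ) ^ (-l)), fun k hk => ?_⟩
  have key : γ ^ k ≤ max 1 ((γ'/γ) ^ (-l)) * γ' ^ k := by
    have e : γ ^ k = (γ'/γ) ^ (-k) * γ' ^ k := by
      rw [_root_.zpow_neg, div_zpow]
      field_simp
    rw [e]
    exact mul_le_mul_of_nonneg_right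
      (le_max_of_le_right (zpow_le_zpow_right₀ h1 (by omega))) (zpow_nonneg hγ'.le _)
  calc ‖evol A k l *ᵥ ξ‖ ≤ C * γ ^ k := hC k hk
    _ ≤ C * (max 1 ((γ'/γ) ^ (-l)) * γ' ^ k) := mul_le_mul_of_nonneg_left key hC0
    _ = C * max 1 ((γ'/γ) ^ (-l)) * γ' ^ k := by ring

lemma W_anti {γ γ' : ℝ} (hγ : 0 < γ) (h : γ ≤ γ') (l : ℤ) : Wsub A γ' l ≤ Wsub A γ l := by
  have hγ' : 0 < γ' := lt_of_lt_of_le hγ h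
  have h1 : 1 ≤ γ' / γ := (one_le_div hγ).mpr h
  rintro ξ ⟨C, hC⟩
  have hC0 : 0 ≤ C := C_nonneg A hγ' (hC l le_rfl)
  refine ⟨C * max 1 ((γ'/γ) ^ l), fun k hk => ?_⟩
  have key : γ' ^ k ≤ max 1 ((γ'/γ) ^ l) * γ ^ k := by
    have e : γ' ^ k = (γ'/γ) ^ k * γ ^ k := by
      rw [div_zpow]; field_simp
    rw [e]
    exact mul_le_mul_of_nonneg_right
      (le_max_of_le_right (zpow_le_zpow_right₀ h1 hk)) (zpow_nonneg hγ.le _)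
  calc ‖evol A k l *ᵥ ξ‖ ≤ C * γ' ^ k := hC k hk
    _ ≤ C * (max 1 ((γ'/γ) ^ l) * γ ^ k) := mul_le_mul_of_nonneg_left key hC0
    _ = C * max 1 ((γ'/γ) ^ l) * γ ^ k := by ring
end An3

section An4
variable {N : ℕ} (A : ℤ → GL (Fin N) ℝ)

lemma rank_P_eq {P : ℤ → Mat N} (hP : IsInvariantProjector A P) (l : ℤ) :
    (P l).rank = (P 0).rank := by
  have h0l : IsUnit (evol A 0 l).det := (Matrix.isUnit_iff_isUnit_det _).mp (isUnit_evol A 0 l)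
  have hl0 : IsUnit (evol A l 0).det := (Matrix.isUnit_iff_isUnit_det _).mp (isUnit_evol A l 0)
  rw [proj_conj2 A hP 0 l, Matrix.rank_mul_eq_left_of_isUnit_det _ _ h0l,
    Matrix.rank_mul_eq_right_of_isUnit_det _ _ hl0]

lemma rank_eq_finrank_V {γ K α ε : ℝ} {P : ℤ → Mat N} (hγ : 0 < γ)
    (hN : NEDWith A γ P K α ε) (hs : α * ε ^ 2 < 1) (l : ℤ) :
    (P l).rank = Module.finrank ℝ (Vsub A γ l) := by
  have h : (P l).rank = Module.finrank ℝ (LinearMap.range (P l).mulVecLin) := rfl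
  rw [h, range_eq_V A hγ hN hs l]

lemma proj_unique {γ₁ γ₂ K₁ α₁ ε₁ K₂ α₂ ε₂ : ℝ} {P₁ P₂ : ℤ → Mat N}
    (h1pos : 0 < γ₁) (hle : γ₁ ≤ γ₂)
    (hN1 : NEDWith A γ₁ P₁ K₁ α₁ ε₁) (hs1 : α₁ * ε₁ ^ 2 < 1)
    (hN2 : NEDWith A γ₂ P₂ K₂ α₂ ε₂) (hs2 : α₂ * ε₂ ^ 2 < 1)
    (hrk : (P₁ 0).rank = (P₂ 0).rank) : P₁ = P₂ := by
  have h2pos : 0 < γ₂ := lt_of_lt_of_le h1pos hle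
  funext l
  have hrkl : (P₁ l).rank = (P₂ l).rank := by
    rw [rank_P_eq A hN1.1 l, rank_P_eq A hN2.1 l, hrk]
  have hrange : LinearMap.range (P₁ l).mulVecLin = LinearMap.range (P₂ l).mulVecLin := by
    apply Submodule.eq_of_le_of_finrank_eq
    · rw [range_eq_V A h1pos hN1 hs1 l, range_eq_V A h2pos hN2 hs2 l]
      exact V_mono A h1pos hle l
    · exact hrkl
  have hker : LinearMap.ker (P₂ l).mulVecLin = LinearMap.ker (P₁ l).mulVecLin := by
    apply Submodule.eq_of_le_of_finrank_eq
    · rw [ker_eq_W A h1pos hN1 l, ker_eq_W A h2pos hN2 l]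
      exact W_anti A h1pos hle l
    · have e1 := LinearMap.finrank_range_add_finrank_ker (P₁ l).mulVecLin
      have e2 := LinearMap.finrank_range_add_finrank_ker (P₂ l).mulVecLin
      rw [hrange] at e1
      omega
  -- now P₁ l = P₂ l
  have hvec : ∀ x, (P₁ l) *ᵥ x = (P₂ l) *ᵥ x := by
    intro x
    have hxdec : (P₂ l) *ᵥ x ∈ LinearMap.range (P₁ l).mulVecLin := by
      rw [hrange]; exact ⟨x, rfl⟩
    obtain ⟨y, hy⟩ := hxdec
    have hfix : (P₁ l) *ᵥ ((P₂ l) *ᵥ x) = (P₂ l) *ᵥ x := by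
      rw [← hy]
      show (P₁ l) *ᵥ ((P₁ l) *ᵥ y) = (P₁ l) *ᵥ y
      rw [mulVec_mulVec, hN1.1.1 l]
    have hkerx : (P₁ l) *ᵥ (x - (P₂ l) *ᵥ x) = 0 := by
      have : x - (P₂ l) *ᵥ x ∈ LinearMap.ker (P₂ l).mulVecLin := by
        show (P₂ l) *ᵥ (x - (P₂ l) *ᵥ x) = 0
        rw [mulVec_sub, mulVec_mulVec, hN2.1.1 l, sub_self]
      rw [hker] at this
      exact this
    have h2 : (P₁ l) *ᵥ (x - (P₂ l) *ᵥ x) = (P₁ l) *ᵥ x - (P₂ l) *ᵥ x := by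
      rw [mulVec_sub, hfix]
    rw [h2] at hkerx
    exact sub_eq_zero.mp hkerx
  ext i j
  have h1 := congrFun (hvec (Pi.single j 1)) i
  rwa [mulVec_single_one, mulVec_single_one] at h1
end An4

section An5
variable {N : ℕ} (A : ℤ → GL (Fin N) ℝ)

lemma interp_le {x B₁ B₂ θ : ℝ} (hx : 0 ≤ x) (hB₁ : 0 ≤ B₁) (hB₂ : 0 ≤ B₂)
    (hb1 : x ≤ B₁) (hb2 : x ≤ B₂) (hθ0 : 0 ≤ θ) (hθ1 : θ ≤ 1) :
    x ≤ B₁ ^ θ * B₂ ^ (1-θ) := by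
  rcases eq_or_lt_of_le hx with h | h
  · rw [← h]
    exact mul_nonneg (Real.rpow_nonneg hB₁ θ) (Real.rpow_nonneg hB₂ _)
  · have hsplit : x = x ^ θ * x ^ (1-θ) := by
      rw [← Real.rpow_add h]
      norm_num
    exact le_trans (le_of_eq hsplit)
      (mul_le_mul (Real.rpow_le_rpow h.le hb1 hθ0) (Real.rpow_le_rpow h.le hb2 (by linarith))
        (Real.rpow_nonneg h.le _) (Real.rpow_nonneg hB₁ _))

lemma interp_lt_one {x y θ : ℝ} (hx0 : 0 < x) (hx1 : x < 1) (hy0 : 0 < y) (hy1 : y < 1)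
    (hθ0 : 0 ≤ θ) (hθ1 : θ ≤ 1) : x ^ θ * y ^ (1-θ) < 1 := by
  rcases eq_or_lt_of_le hθ0 with h | h
  · rw [← h, Real.rpow_zero, one_mul, sub_zero, Real.rpow_one]; exact hy1
  · have h1 : x ^ θ < 1 := Real.rpow_lt_one hx0.le hx1 h
    have h2 : y ^ (1-θ) ≤ 1 := Real.rpow_le_one hy0.le hy1.le (by linarith)
    calc x ^ θ * y ^ (1-θ) ≤ x ^ θ * 1 :=
          mul_le_mul_of_nonneg_left h2 (Real.rpow_pos_of_pos hx0 θ).le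
      _ < 1 := by rwa [mul_one]

lemma one_le_interp {x y θ : ℝ} (hx : 1 ≤ x) (hy : 1 ≤ y) (hθ0 : 0 ≤ θ) (hθ1 : θ ≤ 1) :
    1 ≤ x ^ θ * y ^ (1-θ) := by
  have h1 : (1:ℝ) ≤ x ^ θ := Real.one_le_rpow hx hθ0
  have h2 : (1:ℝ) ≤ y ^ (1-θ) := Real.one_le_rpow hy (by linarith)
  nlinarith

lemma zrpow_comm {x : ℝ} (hx : 0 < x) (θ : ℝ) (n : ℤ) : (x ^ n) ^ θ = (x ^ θ) ^ n := by
  rw [← Real.rpow_intCast x n, ← Real.rpow_intCast (x ^ θ) n, ← Real.rpow_mul hx.le,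
    ← Real.rpow_mul hx.le, mul_comm]

lemma rpow_interp_max {K₁ K₂ θ : ℝ} (h1 : 0 < K₁) (h2 : 0 < K₂) (hθ0 : 0 ≤ θ) (hθ1 : θ ≤ 1) :
    K₁ ^ θ * K₂ ^ (1-θ) ≤ max K₁ K₂ := by
  have hm : 0 < max K₁ K₂ := lt_max_of_lt_left h1
  calc K₁ ^ θ * K₂ ^ (1-θ) ≤ (max K₁ K₂) ^ θ * (max K₁ K₂) ^ (1-θ) :=
        mul_le_mul (Real.rpow_le_rpow h1.le (le_max_left _ _) hθ0)
          (Real.rpow_le_rpow h2.le (le_max_right _ _) (by linarith))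
          (Real.rpow_nonneg h2.le _) (Real.rpow_nonneg hm.le _)
    _ = max K₁ K₂ := by rw [← Real.rpow_add hm]; norm_num

lemma scalar_interp {E K₁ K₂ a₁ a₂ e₁ e₂ θ : ℝ} (m l : ℤ)
    (hK₁ : 0 < K₁) (hK₂ : 0 < K₂) (ha₁ : 0 < a₁) (ha₂ : 0 < a₂)
    (he₁ : 0 < e₁) (he₂ : 0 < e₂) (hθ0 : 0 ≤ θ) (hθ1 : θ ≤ 1) (hE : 0 ≤ E)
    (h1 : E ≤ K₁ * a₁ ^ m * e₁ ^ l) (h2 : E ≤ K₂ * a₂ ^ m * e₂ ^ l) :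
    E ≤ max K₁ K₂ * (a₁ ^ θ * a₂ ^ (1-θ)) ^ m * (e₁ ^ θ * e₂ ^ (1-θ)) ^ l := by
  have hB₁ : (0:ℝ) ≤ K₁ * a₁ ^ m * e₁ ^ l := by positivity
  have hB₂ : (0:ℝ) ≤ K₂ * a₂ ^ m * e₂ ^ l := by positivity
  have step := interp_le hE hB₁ hB₂ h1 h2 hθ0 hθ1
  have hrw : (K₁ * a₁ ^ m * e₁ ^ l) ^ θ * (K₂ * a₂ ^ m * e₂ ^ l) ^ (1-θ)
      = (K₁ ^ θ * K₂ ^ (1-θ)) * (a₁ ^ θ * a₂ ^ (1-θ)) ^ m * (e₁ ^ θ * e₂ ^ (1-θ)) ^ l := by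
    rw [Real.mul_rpow (by positivity) (by positivity),
      Real.mul_rpow (by positivity) (by positivity),
      Real.mul_rpow (by positivity) (by positivity),
      Real.mul_rpow (by positivity) (by positivity),
      zrpow_comm ha₁, zrpow_comm ha₂, zrpow_comm he₁, zrpow_comm he₂,
      mul_zpow, mul_zpow]
    ring
  rw [hrw] at step
  refine le_trans step ?_
  have := rpow_interp_max hK₁ hK₂ hθ0 hθ1
  have hz1 : (0:ℝ) ≤ (a₁ ^ θ * a₂ ^ (1-θ)) ^ m :=
    zpow_nonneg (by positivity) m
  have hz2 : (0:ℝ) ≤ (e₁ ^ θ * e₂ ^ (1-θ)) ^ l :=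
    zpow_nonneg (by positivity) l
  exact mul_le_mul_of_nonneg_right (mul_le_mul_of_nonneg_right this hz1) hz2

lemma zpow_le_zpow_base {x y : ℝ} {n : ℤ} (hn : 0 ≤ n) (hx : 0 ≤ x) (h : x ≤ y) :
    x ^ n ≤ y ^ n := by
  lift n to ℕ using hn
  rw [zpow_natCast, zpow_natCast]
  exact pow_le_pow_left₀ hx h n
end An5

section An6
variable {N : ℕ} (A : ℤ → GL (Fin N) ℝ)

lemma sq_rpow {x θ : ℝ} (hx : 0 ≤ x) : (x ^ θ) ^ 2 = (x ^ 2) ^ θ := by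
  rw [← Real.rpow_natCast (x ^ θ) 2, ← Real.rpow_mul hx, ← Real.rpow_natCast x 2,
    ← Real.rpow_mul hx, mul_comm]

lemma merge {γ₁ γ₂ K₁ α₁ ε₁ K₂ α₂ ε₂ θ : ℝ} {P : ℤ → Mat N}
    (h1 : 0 < γ₁) (h2 : 0 < γ₂)
    (hN1 : NEDWith A γ₁ P K₁ α₁ ε₁) (hs1 : α₁ * ε₁ ^ 2 < 1)
    (hN2 : NEDWith A γ₂ P K₂ α₂ ε₂) (hs2 : α₂ * ε₂ ^ 2 < 1)
    (hθ0 : 0 ≤ θ) (hθ1 : θ ≤ 1) :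
    NEDWith A (γ₁ ^ θ * γ₂ ^ (1-θ)) P (max K₁ K₂) (α₁ ^ θ * α₂ ^ (1-θ)) (ε₁ ^ θ * ε₂ ^ (1-θ))
      ∧ (α₁ ^ θ * α₂ ^ (1-θ)) * (ε₁ ^ θ * ε₂ ^ (1-θ)) ^ 2 < 1 := by
  obtain ⟨hP, hK₁, hα₁0, hα₁1, hε₁, hst₁, hun₁⟩ := hN1
  obtain ⟨-, hK₂, hα₂0, hα₂1, hε₂, hst₂, hun₂⟩ := hN2
  have hε₁0 : (0:ℝ) < ε₁ := lt_of_lt_of_le one_pos hε₁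
  have hε₂0 : (0:ℝ) < ε₂ := lt_of_lt_of_le one_pos hε₂
  have hγpos : 0 < γ₁ ^ θ * γ₂ ^ (1-θ) :=
    mul_pos (Real.rpow_pos_of_pos h1 _) (Real.rpow_pos_of_pos h2 _)
  have hαpos : 0 < α₁ ^ θ * α₂ ^ (1-θ) :=
    mul_pos (Real.rpow_pos_of_pos hα₁0 _) (Real.rpow_pos_of_pos hα₂0 _)
  have hγne : γ₁ ^ θ * γ₂ ^ (1-θ) ≠ 0 := ne_of_gt hγpos
  have hone : (γ₁ ^ θ * γ₂ ^ (1-θ)) ^ (0:ℤ) = 1 := zpow_zero _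
  have hstrong : (α₁ ^ θ * α₂ ^ (1-θ)) * (ε₁ ^ θ * ε₂ ^ (1-θ)) ^ 2 < 1 := by
    have hid : (α₁ ^ θ * α₂ ^ (1-θ)) * (ε₁ ^ θ * ε₂ ^ (1-θ)) ^ 2
        = (α₁ * ε₁ ^ 2) ^ θ * (α₂ * ε₂ ^ 2) ^ (1-θ) := by
      rw [Real.mul_rpow hα₁0.le (by positivity), Real.mul_rpow hα₂0.le (by positivity),
        mul_pow, sq_rpow hε₁0.le, sq_rpow hε₂0.le]
      ring
    rw [hid]
    exact interp_lt_one (by positivity) hs1 (by positivity) hs2 hθ0 hθ1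
  refine ⟨⟨hP, le_trans hK₁ (le_max_left _ _), hαpos,
    interp_lt_one hα₁0 hα₁1 hα₂0 hα₂1 hθ0 hθ1, one_le_interp hε₁ hε₂ hθ0 hθ1, ?_, ?_⟩, hstrong⟩
  · -- stable
    intro k l hlk
    have hE : (0:ℝ) ≤ ‖evol A k l * P l‖ := norm_nonneg _
    have h1b : ‖evol A k l * P l‖ ≤ K₁ * (α₁*γ₁) ^ (k-l) * ε₁ ^ l := by
      calc ‖evol A k l * P l‖ = γ₁ ^ (k-l) * ‖evolW A γ₁ k l * P l‖ :=
            norm_evol_mul A h1 k l (P l)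
        _ ≤ γ₁ ^ (k-l) * (K₁ * α₁ ^ (k-l) * ε₁ ^ l) :=
            mul_le_mul_of_nonneg_left (hst₁ k l hlk) (zpow_nonneg h1.le _)
        _ = K₁ * (α₁*γ₁) ^ (k-l) * ε₁ ^ l := by rw [mul_zpow]; ring
    have h2b : ‖evol A k l * P l‖ ≤ K₂ * (α₂*γ₂) ^ (k-l) * ε₂ ^ l := by
      calc ‖evol A k l * P l‖ = γ₂ ^ (k-l) * ‖evolW A γ₂ k l * P l‖ :=
            norm_evol_mul A h2 k l (P l)
        _ ≤ γ₂ ^ (k-l) * (K₂ * α₂ ^ (k-l) * ε₂ ^ l) :=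
            mul_le_mul_of_nonneg_left (hst₂ k l hlk) (zpow_nonneg h2.le _)
        _ = K₂ * (α₂*γ₂) ^ (k-l) * ε₂ ^ l := by rw [mul_zpow]; ring
    have key := scalar_interp (k-l) l (lt_of_lt_of_le one_pos hK₁) (lt_of_lt_of_le one_pos hK₂)
      (mul_pos hα₁0 h1) (mul_pos hα₂0 h2) hε₁0 hε₂0 hθ0 hθ1 hE h1b h2b
    have hprod : (α₁*γ₁) ^ θ * (α₂*γ₂) ^ (1-θ)
        = (α₁ ^ θ * α₂ ^ (1-θ)) * (γ₁ ^ θ * γ₂ ^ (1-θ)) := by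
      rw [Real.mul_rpow hα₁0.le h1.le, Real.mul_rpow hα₂0.le h2.le]; ring
    rw [hprod] at key
    calc ‖evolW A (γ₁ ^ θ * γ₂ ^ (1-θ)) k l * P l‖
        = (γ₁ ^ θ * γ₂ ^ (1-θ)) ^ (l-k) * ‖evol A k l * P l‖ := norm_evolW_mul A hγpos k l _
      _ ≤ (γ₁ ^ θ * γ₂ ^ (1-θ)) ^ (l-k) *
          (max K₁ K₂ * ((α₁ ^ θ * α₂ ^ (1-θ)) * (γ₁ ^ θ * γ₂ ^ (1-θ))) ^ (k-l)
            * (ε₁ ^ θ * ε₂ ^ (1-θ)) ^ l) :=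
          mul_le_mul_of_nonneg_left key (zpow_nonneg hγpos.le _)
      _ = max K₁ K₂ * (α₁ ^ θ * α₂ ^ (1-θ)) ^ (k-l) * (ε₁ ^ θ * ε₂ ^ (1-θ)) ^ l := by
          have hc : (γ₁ ^ θ * γ₂ ^ (1-θ)) ^ (l-k) * (γ₁ ^ θ * γ₂ ^ (1-θ)) ^ (k-l) = 1 := by
            rw [← zpow_add₀ hγne]; norm_num
          have hm := mul_zpow (α₁ ^ θ * α₂ ^ (1-θ)) (γ₁ ^ θ * γ₂ ^ (1-θ)) (k-l)
          rw [hm]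
          linear_combination (max K₁ K₂ * (α₁ ^ θ * α₂ ^ (1-θ)) ^ (k-l)
            * (ε₁ ^ θ * ε₂ ^ (1-θ)) ^ l) * hc
  · -- unstable
    intro k l hkl
    have hE : (0:ℝ) ≤ ‖evol A k l * (1 - P l)‖ := norm_nonneg _
    have h1b : ‖evol A k l * (1 - P l)‖ ≤ K₁ * (γ₁*(1/α₁)) ^ (k-l) * ε₁ ^ l := by
      calc ‖evol A k l * (1 - P l)‖ = γ₁ ^ (k-l) * ‖evolW A γ₁ k l * (1 - P l)‖ :=
            norm_evol_mul A h1 k l _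
        _ ≤ γ₁ ^ (k-l) * (K₁ * (1/α₁) ^ (k-l) * ε₁ ^ l) :=
            mul_le_mul_of_nonneg_left (hun₁ k l hkl) (zpow_nonneg h1.le _)
        _ = K₁ * (γ₁*(1/α₁)) ^ (k-l) * ε₁ ^ l := by rw [mul_zpow]; ring
    have h2b : ‖evol A k l * (1 - P l)‖ ≤ K₂ * (γ₂*(1/α₂)) ^ (k-l) * ε₂ ^ l := by
      calc ‖evol A k l * (1 - P l)‖ = γ₂ ^ (k-l) * ‖evolW A γ₂ k l * (1 - P l)‖ :=
            norm_evol_mul A h2 k l _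
        _ ≤ γ₂ ^ (k-l) * (K₂ * (1/α₂) ^ (k-l) * ε₂ ^ l) :=
            mul_le_mul_of_nonneg_left (hun₂ k l hkl) (zpow_nonneg h2.le _)
        _ = K₂ * (γ₂*(1/α₂)) ^ (k-l) * ε₂ ^ l := by rw [mul_zpow]; ring
    have key := scalar_interp (k-l) l (lt_of_lt_of_le one_pos hK₁) (lt_of_lt_of_le one_pos hK₂)
      (mul_pos h1 (by positivity)) (mul_pos h2 (by positivity)) hε₁0 hε₂0 hθ0 hθ1 hE h1b h2b
    have hprod : (γ₁*(1/α₁)) ^ θ * (γ₂*(1/α₂)) ^ (1-θ)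
        = (γ₁ ^ θ * γ₂ ^ (1-θ)) * (1/(α₁ ^ θ * α₂ ^ (1-θ))) := by
      rw [Real.mul_rpow h1.le (by positivity), Real.mul_rpow h2.le (by positivity),
        one_div, one_div, one_div, Real.inv_rpow hα₁0.le, Real.inv_rpow hα₂0.le, mul_inv]
      ring
    rw [hprod] at key
    calc ‖evolW A (γ₁ ^ θ * γ₂ ^ (1-θ)) k l * (1 - P l)‖
        = (γ₁ ^ θ * γ₂ ^ (1-θ)) ^ (l-k) * ‖evol A k l * (1 - P l)‖ := norm_evolW_mul A hγpos k l _
      _ ≤ (γ₁ ^ θ * γ₂ ^ (1-θ)) ^ (l-k) *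
          (max K₁ K₂ * ((γ₁ ^ θ * γ₂ ^ (1-θ)) * (1/(α₁ ^ θ * α₂ ^ (1-θ)))) ^ (k-l)
            * (ε₁ ^ θ * ε₂ ^ (1-θ)) ^ l) :=
          mul_le_mul_of_nonneg_left key (zpow_nonneg hγpos.le _)
      _ = max K₁ K₂ * (1/(α₁ ^ θ * α₂ ^ (1-θ))) ^ (k-l) * (ε₁ ^ θ * ε₂ ^ (1-θ)) ^ l := by
          have hc : (γ₁ ^ θ * γ₂ ^ (1-θ)) ^ (l-k) * (γ₁ ^ θ * γ₂ ^ (1-θ)) ^ (k-l) = 1 := by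
            rw [← zpow_add₀ hγne]; norm_num
          have hm := mul_zpow (γ₁ ^ θ * γ₂ ^ (1-θ)) (1/(α₁ ^ θ * α₂ ^ (1-θ))) (k-l)
          rw [hm]
          linear_combination (max K₁ K₂ * (1/(α₁ ^ θ * α₂ ^ (1-θ))) ^ (k-l)
            * (ε₁ ^ θ * ε₂ ^ (1-θ)) ^ l) * hc
end An6

section An7
variable {N : ℕ} (A : ℤ → GL (Fin N) ℝ)

lemma scale {γ γ' s K α ε : ℝ} {P : ℤ → Mat N} (hγ : 0 < γ) (hγ' : 0 < γ')
    (hs1 : 1 ≤ s) (hαs : α * s < 1) (hN : NEDWith A γ P K α ε)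
    (hlo : γ / s ≤ γ') (hhi : γ' ≤ γ * s) :
    NEDWith A γ' P K (α * s) ε := by
  obtain ⟨hP, hK, hα0, hα1, hε, hst, hun⟩ := hN
  have hγne : γ ≠ 0 := ne_of_gt hγ
  have hγ'ne : γ' ≠ 0 := ne_of_gt hγ'
  have hs0 : (0:ℝ) < s := lt_of_lt_of_le one_pos hs1
  have hr1 : γ / γ' ≤ s := by
    rw [div_le_iff₀ hγ']
    rw [div_le_iff₀ hs0] at hlo
    nlinarith
  have hr2 : γ' / γ ≤ s := by rw [div_le_iff₀ hγ]; nlinarith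
  refine ⟨hP, hK, mul_pos hα0 (by linarith), hαs, hε, ?_, ?_⟩
  · intro k l hlk
    have hb := hst k l hlk
    have hkey : (γ / γ') ^ (k-l) ≤ s ^ (k-l) :=
      zpow_le_zpow_base (by omega) (by positivity) hr1
    calc ‖evolW A γ' k l * P l‖ = γ' ^ (l-k) * ‖evol A k l * P l‖ := norm_evolW_mul A hγ' k l _
      _ = γ' ^ (l-k) * (γ ^ (k-l) * ‖evolW A γ k l * P l‖) := by rw [norm_evol_mul A hγ k l]
      _ = (γ/γ') ^ (k-l) * ‖evolW A γ k l * P l‖ := by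
          rw [div_zpow]
          rw [show γ' ^ (l-k) = (γ' ^ (k-l))⁻¹ by rw [← _root_.zpow_neg]; congr 1; ring]
          ring
      _ ≤ s ^ (k-l) * (K * α ^ (k-l) * ε ^ l) :=
          mul_le_mul hkey hb (norm_nonneg _) (by positivity)
      _ = K * (α * s) ^ (k-l) * ε ^ l := by rw [mul_zpow]; ring
  · intro k l hkl
    have hb := hun k l hkl
    have hkey : (γ' / γ) ^ (l-k) ≤ s ^ (l-k) :=
      zpow_le_zpow_base (by omega) (by positivity) hr2
    calc ‖evolW A γ' k l * (1 - P l)‖ = γ' ^ (l-k) * ‖evol A k l * (1 - P l)‖ :=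
          norm_evolW_mul A hγ' k l _
      _ = γ' ^ (l-k) * (γ ^ (k-l) * ‖evolW A γ k l * (1 - P l)‖) := by
          rw [norm_evol_mul A hγ k l]
      _ = (γ'/γ) ^ (l-k) * ‖evolW A γ k l * (1 - P l)‖ := by
          rw [div_zpow]
          rw [show γ ^ (k-l) = (γ ^ (l-k))⁻¹ by rw [← _root_.zpow_neg]; congr 1; ring]
          ring
      _ ≤ s ^ (l-k) * (K * (1/α) ^ (k-l) * ε ^ l) :=
          mul_le_mul hkey hb (norm_nonneg _) (by positivity)
      _ = K * (1/(α*s)) ^ (k-l) * ε ^ l := by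
          rw [one_div_zpow_eq, one_div_zpow_eq, neg_sub, mul_zpow]
          ring
end An7

def HasStrongNED' {N : ℕ} (A : ℤ → GL (Fin N) ℝ) (γ : ℝ) : Prop :=
  ∃ P K α ε, NEDWith A γ P K α ε ∧ α * ε ^ 2 < 1

section An8
variable {N : ℕ} (A : ℤ → GL (Fin N) ℝ)

lemma norm_evolW {γ : ℝ} (hγ : 0 < γ) (k l : ℤ) :
    ‖evolW A γ k l‖ = γ ^ (l - k) * ‖evol A k l‖ := by
  rw [evolW, norm_smul, Real.norm_eq_abs, abs_of_pos (zpow_pos hγ _)]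

lemma ned_small {K ε a γ : ℝ} (hK : 0 < K) (hε : 1 ≤ ε) (ha : 1 ≤ a)
    (hbd : ∀ k l : ℤ, ‖evol A k l‖ ≤ K * a ^ |k - l| * ε ^ l)
    (hγ : 0 < γ) (hsm : γ * (a * ε ^ 2) < 1) :
    NEDWith A γ (fun _ => 0) (max K 1) (γ * a) ε ∧ (γ * a) * ε ^ 2 < 1 := by
  have hε0 : (0:ℝ) < ε := lt_of_lt_of_le one_pos hε
  have hstrong : (γ * a) * ε ^ 2 < 1 := by nlinarith
  have hα1 : γ * a < 1 := by nlinarith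
  refine ⟨⟨⟨fun k => by rw [mul_zero], fun k => by rw [zero_mul, mul_zero]⟩,
    le_max_right _ _, by positivity, hα1, hε, ?_, ?_⟩, hstrong⟩
  · intro k l hlk
    rw [mul_zero, norm_zero]
    positivity
  · intro k l hkl
    rw [sub_zero, mul_one]
    have habs : |k - l| = l - k := by rw [abs_of_nonpos (by omega)]; ring
    calc ‖evolW A γ k l‖ = γ ^ (l-k) * ‖evol A k l‖ := norm_evolW A hγ k l
      _ ≤ γ ^ (l-k) * (K * a ^ |k - l| * ε ^ l) :=
          mul_le_mul_of_nonneg_left (hbd k l) (zpow_nonneg hγ.le _)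
      _ = K * (γ * a) ^ (l-k) * ε ^ l := by rw [habs, mul_zpow]; ring
      _ ≤ max K 1 * (1/(γ*a)) ^ (k-l) * ε ^ l := by
          rw [one_div_zpow_eq, neg_sub]
          exact mul_le_mul_of_nonneg_right (mul_le_mul_of_nonneg_right (le_max_left K 1)
            (zpow_nonneg (by positivity) _)) (zpow_nonneg hε0.le _)

lemma ned_large {K ε a γ : ℝ} (hK : 0 < K) (hε : 1 ≤ ε) (ha : 1 ≤ a)
    (hbd : ∀ k l : ℤ, ‖evol A k l‖ ≤ K * a ^ |k - l| * ε ^ l)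
    (hla : a * ε ^ 2 < γ) :
    NEDWith A γ (fun _ => 1) (max K 1) (a / γ) ε ∧ (a / γ) * ε ^ 2 < 1 := by
  have hε0 : (0:ℝ) < ε := lt_of_lt_of_le one_pos hε
  have hγ : 0 < γ := lt_trans (by positivity) hla
  have hstrong : (a / γ) * ε ^ 2 < 1 := by
    rw [div_mul_eq_mul_div, div_lt_one hγ]; nlinarith
  have hα1 : a / γ < 1 := by
    rw [div_lt_one hγ]
    nlinarith [mul_nonneg (by linarith : (0:ℝ) ≤ a) (by nlinarith : (0:ℝ) ≤ ε^2 - 1)]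
  refine ⟨⟨⟨fun k => by rw [one_mul], fun k => by rw [one_mul, mul_one]⟩,
    le_max_right _ _, by positivity, hα1, hε, ?_, ?_⟩, hstrong⟩
  · intro k l hlk
    rw [mul_one]
    have habs : |k - l| = k - l := abs_of_nonneg (by omega)
    calc ‖evolW A γ k l‖ = γ ^ (l-k) * ‖evol A k l‖ := norm_evolW A hγ k l
      _ ≤ γ ^ (l-k) * (K * a ^ |k - l| * ε ^ l) :=
          mul_le_mul_of_nonneg_left (hbd k l) (zpow_nonneg hγ.le _)
      _ = K * (a / γ) ^ (k-l) * ε ^ l := by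
          rw [habs, div_zpow]
          rw [show γ ^ (l-k) = (γ ^ (k-l))⁻¹ by rw [← _root_.zpow_neg]; congr 1; ring]
          ring
      _ ≤ max K 1 * (a/γ) ^ (k-l) * ε ^ l :=
          mul_le_mul_of_nonneg_right (mul_le_mul_of_nonneg_right (le_max_left K 1)
            (zpow_nonneg (by positivity) _)) (zpow_nonneg hε0.le _)
  · intro k l hkl
    rw [sub_self, mul_zero, norm_zero]
    positivity

/-- the set of `γ` admitting a strong NED whose projector has rank `r` -/
def RS (r : ℕ) : Set ℝ :=
  {γ | 0 < γ ∧ ∃ P K α ε, NEDWith A γ P K α ε ∧ α * ε ^ 2 < 1 ∧ (P 0).rank = r}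

lemma RS_finrank {r : ℕ} {γ : ℝ} (h : γ ∈ RS A r) :
    Module.finrank ℝ (Vsub A γ 0) = r := by
  obtain ⟨hγ, P, K, α, ε, hN, hs, hr⟩ := h
  rw [← rank_eq_finrank_V A hγ hN hs 0, hr]

lemma RS_disjoint {r r' : ℕ} {γ : ℝ} (h : γ ∈ RS A r) (h' : γ ∈ RS A r') : r = r' := by
  rw [← RS_finrank A h, ← RS_finrank A h']

lemma RS_order {r r' : ℕ} {x y : ℝ} (hx : x ∈ RS A r) (hy : y ∈ RS A r') (hrr : r < r') :
    x < y := by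
  by_contra hc
  push_neg at hc
  have := Submodule.finrank_mono (V_mono A hy.1 hc 0)
  rw [RS_finrank A hx, RS_finrank A hy] at this
  omega

lemma RS_convex {r : ℕ} {x y z : ℝ} (hx : x ∈ RS A r) (hy : y ∈ RS A r)
    (hxz : x ≤ z) (hzy : z ≤ y) : z ∈ RS A r := by
  obtain ⟨hx0, P₁, K₁, α₁, ε₁, hN1, hs1, hr1⟩ := hx
  obtain ⟨hy0, P₂, K₂, α₂, ε₂, hN2, hs2, hr2⟩ := hy
  have hxy : x ≤ y := le_trans hxz hzy
  have hz0 : 0 < z := lt_of_lt_of_le hx0 hxz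
  have hPP : P₁ = P₂ := proj_unique A hx0 hxy hN1 hs1 hN2 hs2 (by rw [hr1, hr2])
  subst hPP
  rcases eq_or_lt_of_le hxy with heq | hlt
  · have hzx : z = x := le_antisymm (heq ▸ hzy) hxz
    exact ⟨hz0, P₁, K₁, α₁, ε₁, hzx ▸ hN1, hs1, hr1⟩
  · have hlog : Real.log x < Real.log y := Real.log_lt_log hx0 hlt
    set θ : ℝ := (Real.log y - Real.log z) / (Real.log y - Real.log x) with hθdef
    have hd : 0 < Real.log y - Real.log x := by linarith
    have hθ0 : 0 ≤ θ := div_nonneg (by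
      have := Real.log_le_log hz0 hzy
      linarith) hd.le
    have hθ1 : θ ≤ 1 := by
      rw [div_le_one hd]
      have := Real.log_le_log hx0 hxz
      linarith
    have hform : x ^ θ * y ^ (1-θ) = z := by
      rw [Real.rpow_def_of_pos hx0, Real.rpow_def_of_pos hy0, ← Real.exp_add]
      rw [show Real.log x * θ + Real.log y * (1-θ) = Real.log z by
        have hdne : Real.log y - Real.log x ≠ 0 := ne_of_gt hd
        rw [hθdef]
        field_simp
        ring]
      exact Real.exp_log hz0
    obtain ⟨hN, hs⟩ := merge A hx0 hy0 hN1 hs1 hN2 hs2 hθ0 hθ1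
    rw [hform] at hN
    exact ⟨hz0, P₁, _, _, _, hN, hs, hr1⟩

lemma RS_nomax {r : ℕ} {γ : ℝ} (h : γ ∈ RS A r) : ∃ γ' ∈ RS A r, γ < γ' := by
  obtain ⟨hγ, P, K, α, ε, hN, hs, hr⟩ := h
  have hα0 := hN.2.2.1
  have hε1 := hN.2.2.2.2.1
  have hε0 : (0:ℝ) < ε := lt_of_lt_of_le one_pos hε1
  set s : ℝ := (1 + α*ε^2) / (2*(α*ε^2)) with hsdef
  have hαε2 : 0 < α*ε^2 := by positivity
  have hαne : α ≠ 0 := ne_of_gt hα0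
  have hεne : ε ≠ 0 := ne_of_gt hε0
  have hs1 : 1 < s := by rw [lt_div_iff₀ (by positivity)]; nlinarith
  have hs0 : (0:ℝ) < s := by linarith
  have hαs : (α*s)*ε^2 < 1 := by
    have hkey : (α*s)*ε^2 = (1 + α*ε^2)/2 := by rw [hsdef]; field_simp
    rw [hkey]; nlinarith
  have hαs1 : α * s < 1 := by nlinarith
  refine ⟨γ * s, ⟨by positivity, P, K, α*s, ε, ?_, hαs, hr⟩,
    by nlinarith [mul_pos hγ (by linarith : (0:ℝ) < s - 1)]⟩
  exact scale A hγ (by positivity) hs1.le hαs1 hN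
    (by
      rw [div_le_iff₀ hs0]
      nlinarith [mul_nonneg hγ.le (by nlinarith : (0:ℝ) ≤ s*s - 1)]) le_rfl

lemma RS_nomin {r : ℕ} {γ : ℝ} (h : γ ∈ RS A r) : ∃ γ' ∈ RS A r, γ' < γ := by
  obtain ⟨hγ, P, K, α, ε, hN, hs, hr⟩ := h
  have hα0 := hN.2.2.1
  have hε1 := hN.2.2.2.2.1
  have hε0 : (0:ℝ) < ε := lt_of_lt_of_le one_pos hε1
  set s : ℝ := (1 + α*ε^2) / (2*(α*ε^2)) with hsdef
  have hαε2 : 0 < α*ε^2 := by positivity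
  have hαne : α ≠ 0 := ne_of_gt hα0
  have hεne : ε ≠ 0 := ne_of_gt hε0
  have hs1 : 1 < s := by rw [lt_div_iff₀ (by positivity)]; nlinarith
  have hs0 : (0:ℝ) < s := by linarith
  have hαs : (α*s)*ε^2 < 1 := by
    have hkey : (α*s)*ε^2 = (1 + α*ε^2)/2 := by rw [hsdef]; field_simp
    rw [hkey]; nlinarith
  have hαs1 : α * s < 1 := by nlinarith
  refine ⟨γ / s, ⟨by positivity, P, K, α*s, ε, ?_, hαs, hr⟩, ?_⟩
  · exact scale A hγ (by positivity) hs1.le hαs1 hN le_rfl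
      (by rw [div_le_iff₀ hs0]; nlinarith [mul_nonneg hγ.le (by nlinarith : (0:ℝ) ≤ s*s - 1)])
  · rw [div_lt_iff₀ hs0]
    nlinarith [mul_pos hγ (by linarith : (0:ℝ) < s - 1)]
end An8

/-- If `x_{k+1} = A_k x_k` is nonuniformly exponentially bounded,
then `Σ_NED(A)` is the disjoint union of at most `N` compact intervals
`[a₁,b₁] ∪ ⋯ ∪ [a_n,b_n]` with `0 < a₁ ≤ b₁ < a₂ ≤ b₂ < ⋯ < a_n ≤ b_n`. -/
theorem sigmaNED_union_compact_intervals {N : ℕ} (A : ℤ → GL (Fin N) ℝ)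
    (K ε a : ℝ) (hK : 0 < K) (hε : 1 ≤ ε) (ha : 1 ≤ a)
    (hbd : ∀ k l : ℤ, ‖evol A k l‖ ≤ K * a ^ |k - l| * ε ^ l) :
    ∃ (n : ℕ) (c d : Fin n → ℝ),
      n ≤ N ∧
      (∀ i, 0 < c i ∧ c i ≤ d i) ∧
      (∀ i j, i < j → d i < c j) ∧
      SigmaNED A = ⋃ i, Set.Icc (c i) (d i) := by
  classical
  have hM1 : (1:ℝ) ≤ a * ε^2 := by nlinarith
  have hM0 : (0:ℝ) < a * ε^2 := by linarith
  -- membership lemmas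
  have hsmall : ∀ γ : ℝ, 0 < γ → γ * (a * ε^2) < 1 → γ ∈ RS A 0 := by
    intro γ h1 h2
    obtain ⟨hN', hs'⟩ := ned_small A hK hε ha hbd h1 h2
    exact ⟨h1, _, _, _, _, hN', hs', Matrix.rank_zero⟩
  have hlarge : ∀ γ : ℝ, a * ε^2 < γ → γ ∈ RS A N := by
    intro γ h2
    obtain ⟨hN', hs'⟩ := ned_large A hK hε ha hbd h2
    refine ⟨lt_trans hM0 h2, _, _, _, _, hN', hs', ?_⟩
    show (1 : Mat N).rank = N
    rw [Matrix.rank_one, Fintype.card_fin]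
  have hmemRS : ∀ γ : ℝ, 0 < γ → HasStrongNED A γ → ∃ r, r ≤ N ∧ γ ∈ RS A r := by
    rintro γ h1 ⟨P, K', α, ε', hN', hs'⟩
    exact ⟨(P 0).rank, (Matrix.rank_le_card_width _).trans (by simp),
      ⟨h1, P, K', α, ε', hN', hs', rfl⟩⟩
  have hRS_strong : ∀ (r : ℕ) (γ : ℝ), γ ∈ RS A r → HasStrongNED A γ := by
    rintro r γ ⟨h1, P, K', α, ε', h2, h3, -⟩
    exact ⟨P, K', α, ε', h2, h3⟩
  -- the finite set of attained ranks
  set T : Finset ℕ := (Finset.range (N+1)).filter (fun r => (RS A r).Nonempty) with hT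
  have hmemT : ∀ r, r ∈ T ↔ (r < N+1 ∧ (RS A r).Nonempty) := by
    intro r
    simp [hT, Finset.mem_filter, Finset.mem_range]
  have h0T : 0 ∈ T := by
    refine (hmemT 0).mpr ⟨by omega, ⟨(2 * (a * ε^2))⁻¹, hsmall _ (by positivity) ?_⟩⟩
    rw [inv_mul_eq_div, div_lt_one (by positivity)]
    linarith
  have hNT : N ∈ T := (hmemT N).mpr ⟨by omega, ⟨a * ε^2 + 1, hlarge _ (by linarith)⟩⟩
  set m := T.card with hm
  have hm1 : 0 < m := Finset.card_pos.mpr ⟨0, h0T⟩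
  have hmN : m ≤ N + 1 := by
    have h1 := Finset.card_le_card (Finset.filter_subset (fun r => (RS A r).Nonempty)
      (Finset.range (N+1)))
    rw [Finset.card_range] at h1
    exact le_of_eq_of_le hm h1
  set e := T.orderIsoOfFin hm.symm with he
  set F : Fin m → ℕ := fun j => ((e j : ℕ)) with hF
  have hFmem : ∀ j, F j ∈ T := fun j => (e j).2
  have hFmono : ∀ {j j' : Fin m}, j < j' → F j < F j' := by
    intro j j' h
    exact Subtype.coe_lt_coe.mpr (e.lt_iff_lt.mpr h)
  have hFsurj : ∀ r ∈ T, ∃ j, F j = r := by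
    intro r hr
    refine ⟨e.symm ⟨r, hr⟩, ?_⟩
    show ((e (e.symm ⟨r, hr⟩) : ℕ)) = r
    rw [OrderIso.apply_symm_apply]
  have hRSne : ∀ j : Fin m, (RS A (F j)).Nonempty := fun j => ((hmemT _).mp (hFmem j)).2
  have hFleN : ∀ j : Fin m, F j ≤ N := fun j => by
    have := ((hmemT _).mp (hFmem j)).1; omega
  have hsetlt : ∀ {j j' : Fin m}, j < j' → ∀ x ∈ RS A (F j), ∀ y ∈ RS A (F j'), x < y :=
    fun h x hx y hy => RS_order A hx hy (hFmono h)
  have hbddA : ∀ {j j' : Fin m}, j < j' → BddAbove (RS A (F j)) := by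
    intro j j' h
    obtain ⟨y, hy⟩ := hRSne j'
    exact ⟨y, fun x hx => (hsetlt h x hx y hy).le⟩
  have hbddB : ∀ j : Fin m, BddBelow (RS A (F j)) := fun j => ⟨0, fun x hx => hx.1.le⟩
  -- the intervals
  set n := m - 1 with hn
  have hnN : n ≤ N := by omega
  have hi0 : ∀ i : Fin n, i.1 < m := fun i => by have := i.2; omega
  have hi1 : ∀ i : Fin n, i.1 + 1 < m := fun i => by have := i.2; omega
  set c : Fin n → ℝ := fun i => sSup (RS A (F ⟨i.1, hi0 i⟩)) with hc
  set d : Fin n → ℝ := fun i => sInf (RS A (F ⟨i.1 + 1, hi1 i⟩)) with hd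
  have hlt01 : ∀ i : Fin n, (⟨i.1, hi0 i⟩ : Fin m) < ⟨i.1 + 1, hi1 i⟩ := fun i => by
    simp [Fin.lt_def]
  refine ⟨n, c, d, hnN, ?_, ?_, ?_⟩
  · -- positivity and c ≤ d
    intro i
    constructor
    · obtain ⟨x, hx⟩ := hRSne ⟨i.1, hi0 i⟩
      exact lt_of_lt_of_le hx.1 (le_csSup (hbddA (hlt01 i)) hx)
    · refine csSup_le (hRSne _) fun x hx => le_csInf (hRSne _) fun y hy => ?_
      exact (hsetlt (hlt01 i) x hx y hy).le
  · -- d i < c j for i < j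
    intro i j hij
    have key : ∃ y z, y ∈ RS A (F ⟨i.1 + 1, hi1 i⟩) ∧ z ∈ RS A (F ⟨j.1, hi0 j⟩) ∧ y ≤ z := by
      rcases eq_or_lt_of_le (show i.1 + 1 ≤ j.1 from hij) with hcase | hcase
      · obtain ⟨y, hy⟩ := hRSne ⟨i.1 + 1, hi1 i⟩
        have hEq : (⟨i.1 + 1, hi1 i⟩ : Fin m) = ⟨j.1, hi0 j⟩ := by
          apply Fin.ext; exact hcase
        exact ⟨y, y, hy, hEq ▸ hy, le_rfl⟩
      · obtain ⟨y, hy⟩ := hRSne ⟨i.1 + 1, hi1 i⟩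
        obtain ⟨z, hz⟩ := hRSne ⟨j.1, hi0 j⟩
        exact ⟨y, z, hy, hz, (hsetlt (show (⟨i.1+1, hi1 i⟩ : Fin m) < ⟨j.1, hi0 j⟩ by
          simp [Fin.lt_def]; omega) y hy z hz).le⟩
    obtain ⟨y, z, hy, hz, hyz⟩ := key
    obtain ⟨y', hy', hy'lt⟩ := RS_nomin A hy
    obtain ⟨z', hz', hz'gt⟩ := RS_nomax A hz
    calc d i ≤ y' := csInf_le (hbddB _) hy'
      _ < y := hy'lt
      _ ≤ z := hyz
      _ < z' := hz'gt
      _ ≤ c j := le_csSup (hbddA (hlt01 j)) hz'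
  · -- the set equality
    ext x
    simp only [Set.mem_iUnion, Set.mem_Icc]
    constructor
    · rintro ⟨hx0, hxn⟩
      -- there is a rank class entirely below x
      have hlow : ∃ j : Fin m, ∃ z ∈ RS A (F j), z < x := by
        obtain ⟨j₀, hj₀⟩ := hFsurj 0 h0T
        set z := min ((2 * (a * ε^2))⁻¹) (x/2) with hz
        have hz0 : 0 < z := lt_min (by positivity) (by linarith)
        have hzM : z * (a * ε^2) < 1 := by
          have h1 : z ≤ (2 * (a * ε^2))⁻¹ := min_le_left _ _
          have h2 : (2 * (a * ε^2))⁻¹ * (a * ε^2) < 1 := by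
            rw [inv_mul_eq_div, div_lt_one (by positivity)]; linarith
          nlinarith
        refine ⟨j₀, z, ?_, ?_⟩
        · have hseq : RS A (F j₀) = RS A 0 := by rw [hj₀]
          rw [hseq]
          exact hsmall z hz0 hzM
        · calc z ≤ x/2 := min_le_right _ _
            _ < x := by linarith
      set S' : Finset (Fin m) := Finset.univ.filter (fun j => ∃ z ∈ RS A (F j), z < x) with hS'
      have hS'ne : S'.Nonempty := by
        obtain ⟨j, hj⟩ := hlow
        exact ⟨j, by simp [hS', hj]⟩
      set t : Fin m := S'.max' hS'ne with ht
      have htS' : t ∈ S' := S'.max'_mem hS'ne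
      have htw : ∃ z ∈ RS A (F t), z < x := by
        have := htS'; simp [hS'] at this; exact this
      have hAllBelow : ∀ z ∈ RS A (F t), z < x := by
        intro z hz
        by_contra hcon
        push_neg at hcon
        obtain ⟨w, hw, hwx⟩ := htw
        exact hxn (hRS_strong _ _ (RS_convex A hw hz hwx.le hcon))
      have htN : F t ≠ N := by
        intro hFN
        have hwN : a * ε^2 + max 0 x + 1 ∈ RS A N := hlarge _ (by
          have := le_max_right (0:ℝ) x
          linarith [le_max_left (0:ℝ) x])
        have hseq2 : RS A (F t) = RS A N := congrArg (RS A) hFN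
        rw [← hseq2] at hwN
        have := hAllBelow _ hwN
        have hxle := le_max_right (0:ℝ) x
        linarith
      obtain ⟨jN, hjN⟩ := hFsurj N hNT
      have htjN : t < jN := by
        rcases lt_trichotomy t jN with h | h | h
        · exact h
        · exact absurd (h ▸ hjN) htN
        · have := hFmono h
          rw [hjN] at this
          have := hFleN t
          omega
      have htn : t.1 < n := by
        have h1 : t.1 + 1 ≤ jN.1 := htjN
        have h2 : jN.1 < m := jN.2
        omega
      refine ⟨⟨t.1, htn⟩, ?_, ?_⟩
      · -- c ≤ x
        have hEq : (⟨t.1, hi0 ⟨t.1, htn⟩⟩ : Fin m) = t := Fin.ext rfl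
        show sSup (RS A (F ⟨t.1, hi0 ⟨t.1, htn⟩⟩)) ≤ x
        rw [hEq]
        exact csSup_le (hRSne t) fun z hz => (hAllBelow z hz).le
      · -- x ≤ d
        refine le_csInf (hRSne _) fun y hy => ?_
        by_contra hcon
        push_neg at hcon
        have hmem : (⟨t.1 + 1, hi1 ⟨t.1, htn⟩⟩ : Fin m) ∈ S' := by
          simp only [hS', Finset.mem_filter, Finset.mem_univ, true_and]
          exact ⟨y, hy, hcon⟩
        have := S'.le_max' _ hmem
        rw [← ht] at this
        have : t.1 + 1 ≤ t.1 := this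
        omega
    · rintro ⟨i, hci, hid⟩
      have hx0 : 0 < x := by
        obtain ⟨z, hz⟩ := hRSne ⟨i.1, hi0 i⟩
        have := le_csSup (hbddA (hlt01 i)) hz
        have hcpos : 0 < c i := lt_of_lt_of_le hz.1 this
        linarith
      refine ⟨hx0, fun hstr => ?_⟩
      obtain ⟨r, hrN, hxRS⟩ := hmemRS x hx0 hstr
      have hrT : r ∈ T := (hmemT r).mpr ⟨by omega, ⟨x, hxRS⟩⟩
      obtain ⟨tt, htt⟩ := hFsurj r hrT
      rw [← htt] at hxRS
      rcases le_or_gt tt ⟨i.1, hi0 i⟩ with hcase | hcase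
      · rcases eq_or_lt_of_le hcase with heq | hlt
        · obtain ⟨x', hx', hxx'⟩ := RS_nomax A (heq ▸ hxRS)
          have := le_csSup (hbddA (hlt01 i)) hx'
          have : x' ≤ c i := this
          linarith
        · obtain ⟨z, hz⟩ := hRSne ⟨i.1, hi0 i⟩
          have h1 := hsetlt hlt x hxRS z hz
          have h2 := le_csSup (hbddA (hlt01 i)) hz
          linarith
      · have hcase' : (⟨i.1 + 1, hi1 i⟩ : Fin m) ≤ tt := by
          have : i.1 < tt.1 := hcase
          show i.1 + 1 ≤ tt.1
          omega
        rcases eq_or_lt_of_le hcase' with heq | hlt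
        · obtain ⟨x', hx', hxx'⟩ := RS_nomin A (heq ▸ hxRS)
          have := csInf_le (hbddB _) hx'
          linarith
        · obtain ⟨y, hy⟩ := hRSne ⟨i.1 + 1, hi1 i⟩
          have h1 := hsetlt hlt y hy x hxRS
          have h2 := csInf_le (hbddB _) hy
          linarith
end

section
/- Let ω > 5a > 0 and consider the scalar equation u_{k+1} = A_k u_k with A_k = e^{−ω + ak(−1)^k − a(k−1)(−1)^{k−1}}. Then Σ_ED(A) = (0,∞), i.e., for no γ > 0 does the weighted equation u_{k+1} = (1/γ)A_k u_k admit an exponential dichotomy. -/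
open Matrix

attribute [local instance] Matrix.linftyOpNormedAddCommGroup

noncomputable def exExp (ω a : ℝ) (k : ℤ) : ℝ :=
  -ω + a * k * (-1 : ℝ) ^ k - a * (k - 1) * (-1 : ℝ) ^ (k - 1)

noncomputable def exScalar (ω a : ℝ) (k : ℤ) : GL (Fin 1) ℝ :=
  Matrix.GeneralLinearGroup.mkOfDetNeZero
    (Matrix.diagonal ![Real.exp (exExp ω a k)])
    (by
      rw [Matrix.det_diagonal, Fin.prod_univ_one]
      simp only [Matrix.cons_val_zero]
      exact (Real.exp_pos _).ne')

/-!
In dimension one an invariant projector commutes with the invertible `A_k`, hence is constant,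
and being idempotent it is identically `0` or `1`. An exponential dichotomy of the weighted
equation then bounds, for every `k`, the one-step map `γ⁻¹ A_k` (if `P = 1`) or its inverse
`γ A_k⁻¹` (if `P = 0`) by `K α`. Here `log A_k` equals `-ω + a(4m - 1)` at `k = 2m` and
`-ω - a(4m + 1)` at `k = 2m + 1`, so neither `A_k` nor `A_k⁻¹` is bounded, whatever `γ > 0`.
-/

section Evolution

variable {N : ℕ} (A : ℤ → GL (Fin N) ℝ)

lemma fundSol_succ (l : ℤ) : fundSol A (l + 1) = A l * fundSol A l := by
  cases l with
  | ofNat n => rfl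
  | negSucc n =>
    cases n with
    | zero => exact (mul_inv_cancel (A (-1))).symm
    | succ m => exact (mul_inv_cancel_left (A (Int.negSucc (m + 1))) (fundSolNeg A m)).symm

lemma evolW_succ_self (γ : ℝ) (l : ℤ) : evolW A γ (l + 1) l = γ⁻¹ • (A l : Mat N) := by
  rw [evolW, evol, fundSol_succ, mul_inv_cancel_right, show l - (l + 1) = -1 by ring,
    _root_.zpow_neg_one]

lemma evolW_self_succ (γ : ℝ) (l : ℤ) :
    evolW A γ l (l + 1) = γ • (((A l)⁻¹ : GL (Fin N) ℝ) : Mat N) := by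
  rw [evolW, evol, fundSol_succ, _root_.mul_inv_rev, mul_inv_cancel_left,
    show l + 1 - l = 1 by ring, zpow_one]

variable {A} {γ : ℝ} {P : ℤ → Mat N} {K α ε : ℝ}

lemma NEDWith.norm_evolW_succ_self_mul_le (h : NEDWith A γ P K α ε) (l : ℤ) :
    ‖evolW A γ (l + 1) l * P l‖ ≤ K * α * ε ^ l := by
  simpa using h.2.2.2.2.2.1 (l + 1) l (by omega)

lemma NEDWith.norm_evolW_self_succ_mul_le (h : NEDWith A γ P K α ε) (l : ℤ) :
    ‖evolW A γ l (l + 1) * (1 - P (l + 1))‖ ≤ K * α * ε ^ (l + 1) := by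
  simpa [one_div] using h.2.2.2.2.2.2 l (l + 1) (by omega)

end Evolution

lemma Matrix.linfty_opNorm_fin_one (M : Mat 1) : ‖M‖ = |M 0 0| := by
  simp [Matrix.linfty_opNorm_def]

lemma Matrix.mul_apply_fin_one (M M' : Mat 1) : (M * M') 0 0 = M 0 0 * M' 0 0 := by
  simp [Matrix.mul_apply]

lemma Matrix.linfty_opNorm_smul_fin_one (c : ℝ) (M : Mat 1) : ‖c • M‖ = |c| * ‖M‖ := by
  rw [Matrix.linfty_opNorm_fin_one, Matrix.linfty_opNorm_fin_one, Matrix.smul_apply, smul_eq_mul,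
    abs_mul]

lemma Matrix.eq_smul_one_fin_one (M : Mat 1) : M = M 0 0 • 1 := by
  ext i j
  simp [Subsingleton.elim i 0, Subsingleton.elim j 0]

lemma Matrix.GeneralLinearGroup.apply_mul_inv_apply_fin_one (B : GL (Fin 1) ℝ) :
    (B : Mat 1) 0 0 * ((B⁻¹ : GL (Fin 1) ℝ) : Mat 1) 0 0 = 1 := by
  rw [← Matrix.mul_apply_fin_one, ← Units.val_mul, mul_inv_cancel]
  rfl

lemma Matrix.GeneralLinearGroup.linfty_opNorm_inv_fin_one (B : GL (Fin 1) ℝ) :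
    ‖((B⁻¹ : GL (Fin 1) ℝ) : Mat 1)‖ = ‖(B : Mat 1)‖⁻¹ := by
  rw [Matrix.linfty_opNorm_fin_one, Matrix.linfty_opNorm_fin_one, ← abs_inv,
    eq_inv_of_mul_eq_one_right (Matrix.GeneralLinearGroup.apply_mul_inv_apply_fin_one B)]

lemma IsInvariantProjector.eq_zero_or_eq_one {A : ℤ → GL (Fin 1) ℝ} {P : ℤ → Mat 1}
    (hP : IsInvariantProjector A P) : (∀ k, P k = 0) ∨ (∀ k, P k = 1) := by
  have hstep (k : ℤ) : P (k + 1) 0 0 = P k 0 0 := by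
    have h := congrFun (congrFun (hP.2 k) 0) 0
    rw [Matrix.mul_apply_fin_one, Matrix.mul_apply_fin_one, mul_comm] at h
    exact mul_left_cancel₀
      (left_ne_zero_of_mul_eq_one (Matrix.GeneralLinearGroup.apply_mul_inv_apply_fin_one (A k))) h
  have hconst (k : ℤ) : P k 0 0 = P 0 0 0 := by
    induction k using Int.induction_on with
    | zero => rfl
    | succ n ih => rw [hstep, ih]
    | pred n ih => rw [← ih, ← hstep, sub_add_cancel]
  have hidem : P 0 0 0 * P 0 0 0 = P 0 0 0 := by
    simpa [Matrix.mul_apply_fin_one] using congrFun (congrFun (hP.1 0) 0) 0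
  rcases IsIdempotentElem.iff_eq_zero_or_one.1 hidem with h0 | h1
  · exact Or.inl fun k => by rw [Matrix.eq_smul_one_fin_one (P k), hconst, h0, zero_smul]
  · exact Or.inr fun k => by rw [Matrix.eq_smul_one_fin_one (P k), hconst, h1, one_smul]

lemma bddAbove_norm_or_bddAbove_norm_inv_of_hasED {A : ℤ → GL (Fin 1) ℝ} {γ : ℝ}
    (hγ : γ ≠ 0) (h : HasED A γ) :
    BddAbove (Set.range fun k => ‖(A k : Mat 1)‖) ∨
      BddAbove (Set.range fun k => ‖(A k : Mat 1)‖⁻¹) := by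
  obtain ⟨P, K, α, hED⟩ := h
  have hγ' : 0 < |γ| := abs_pos.2 hγ
  simp only [bddAbove_def, Set.forall_mem_range]
  rcases hED.1.eq_zero_or_eq_one with hP | hP
  · refine Or.inr ⟨K * α / |γ|, fun l => ?_⟩
    have hl := hED.norm_evolW_self_succ_mul_le l
    rw [evolW_self_succ, hP, sub_zero, mul_one, Matrix.linfty_opNorm_smul_fin_one,
      Matrix.GeneralLinearGroup.linfty_opNorm_inv_fin_one, _root_.one_zpow, mul_one] at hl
    rw [le_div_iff₀ hγ']
    linarith
  · refine Or.inl ⟨K * α * |γ|, fun l => ?_⟩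
    have hl := hED.norm_evolW_succ_self_mul_le l
    rw [evolW_succ_self, hP, mul_one, Matrix.linfty_opNorm_smul_fin_one, _root_.one_zpow,
      mul_one, abs_inv, inv_mul_le_iff₀ hγ'] at hl
    linarith

lemma bddAbove_range_of_bddAbove_range_exp {ι : Type*} {f : ι → ℝ}
    (h : BddAbove (Set.range fun i => Real.exp (f i))) : BddAbove (Set.range f) := by
  obtain ⟨C, hC⟩ := bddAbove_def.1 h
  exact bddAbove_def.2 ⟨C, Set.forall_mem_range.2 fun i =>
    by linarith [Real.add_one_le_exp (f i), hC _ (Set.mem_range_self i)]⟩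

section Example

lemma exExp_two_mul (ω a : ℝ) (m : ℕ) : exExp ω a (2 * m) = -ω + a * (4 * m - 1) := by
  have h1 : (-1 : ℝ) ^ (2 * m : ℤ) = 1 := Even.neg_one_zpow ⟨m, by ring⟩
  have h2 : (-1 : ℝ) ^ ((2 * m : ℤ) - 1) = -1 :=
    Odd.neg_one_zpow ⟨(m : ℤ) - 1, by ring⟩
  unfold exExp
  push_cast
  rw [h1, h2]
  ring

lemma exExp_two_mul_add_one (ω a : ℝ) (m : ℕ) :
    exExp ω a (2 * m + 1) = -ω - a * (4 * m + 1) := by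
  have h1 : (-1 : ℝ) ^ ((2 * m : ℤ) + 1) = -1 := Odd.neg_one_zpow ⟨m, by ring⟩
  have h2 : (-1 : ℝ) ^ ((2 * m : ℤ) + 1 - 1) = 1 := by
    rw [add_sub_cancel_right]; exact Even.neg_one_zpow ⟨m, by ring⟩
  unfold exExp
  push_cast
  rw [h1, h2]
  ring

variable {ω a : ℝ}

lemma not_bddAbove_range_exExp (ha : 0 < a) : ¬ BddAbove (Set.range (exExp ω a)) := by
  rintro ⟨C, hC⟩
  obtain ⟨m, hm⟩ := exists_nat_gt ((C + ω + a) / (4 * a))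
  have hCm := hC (Set.mem_range_self ((2 * m : ℕ) : ℤ))
  rw [div_lt_iff₀ (by positivity)] at hm
  push_cast at hCm
  rw [exExp_two_mul] at hCm
  linarith

lemma not_bddAbove_range_neg_exExp (ha : 0 < a) :
    ¬ BddAbove (Set.range fun k => -exExp ω a k) := by
  rintro ⟨C, hC⟩
  obtain ⟨m, hm⟩ := exists_nat_gt ((C - ω) / (4 * a))
  have hCm := hC (Set.mem_range_self ((2 * m + 1 : ℕ) : ℤ))
  rw [div_lt_iff₀ (by positivity)] at hm
  push_cast at hCm
  rw [exExp_two_mul_add_one] at hCm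
  linarith

lemma norm_exScalar (ω a : ℝ) (k : ℤ) :
    ‖(exScalar ω a k : Mat 1)‖ = Real.exp (exExp ω a k) := by
  rw [Matrix.linfty_opNorm_fin_one]
  exact abs_of_pos (Real.exp_pos _)

end Example

theorem example_sigmaED_full_general (ω a : ℝ) (ha : 0 < a) :
    SigmaED (exScalar ω a) = Set.Ioi 0 := by
  refine Set.Subset.antisymm (fun γ hγ => hγ.1) fun γ (hγ : 0 < γ) => ⟨hγ, fun hED => ?_⟩
  rcases bddAbove_norm_or_bddAbove_norm_inv_of_hasED hγ.ne' hED with hbdd | hbdd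
  · simp only [norm_exScalar] at hbdd
    exact not_bddAbove_range_exExp ha (bddAbove_range_of_bddAbove_range_exp hbdd)
  · simp only [norm_exScalar, ← Real.exp_neg] at hbdd
    exact not_bddAbove_range_neg_exExp ha (bddAbove_range_of_bddAbove_range_exp hbdd)

/-- For `ω > 5a > 0`, the scalar equation `u_{k+1} = A_k u_k` with
`A_k = e^{−ω + ak(−1)^k − a(k−1)(−1)^{k−1}}` has `Σ_ED(A) = (0,∞)`: no weighted
equation `u_{k+1} = (1/γ) A_k u_k` admits an exponential dichotomy. -/
theorem example_sigmaED_full (ω a : ℝ) (ha : 0 < a) (haω : 5 * a < ω) :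
    SigmaED (exScalar ω a) = Set.Ioi 0 :=
  example_sigmaED_full_general ω a ha
end
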